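/- arXiv:2307.05125 — 3 statements merged into one kernel-verified Lean document; each statement's English description precedes it below -/
import Mathlib

section
/- Let Q ∈ ℝ^{n×n}, let φ(x) = x^⊤ Q x, and define a_{i,j} := Q_{i,j} + Q_{j,i} for i ≠ j and a_{i,i} := Q_{i,i}. For i ≠ j define S_{i,j} := Σ_{k ≠ i,j} max{0, a_{j,k} − a_{i,k}} + a_{j,j} − a_{i,i}. Let G = (V, E) be an order of n binary variables such that S_{i,j} ≤ 0 for every edge (i,j) ∈ E. Then G is valid with respect to minimization of φ, i.e., min { φ(x) : x ∈ {0,1}^n } = min { φ(x) : x ∈ B_n^G }. -/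
open Finset

/-- The set of binary vectors `{0,1}^n`, as real vectors. -/
def Bset (n : ℕ) : Set (Fin n → ℝ) := {x | ∀ i, x i = 0 ∨ x i = 1}

/-- The subset of `{0,1}^n` ordered by an edge set `E`. -/
def BsetG (n : ℕ) (E : Finset (Fin n × Fin n)) : Set (Fin n → ℝ) :=
  {x | x ∈ Bset n ∧ ∀ e ∈ E, x e.1 = 1 → x e.2 = 1}

/-- The directed graph on `{1,…,n}` with edge set `E` has no directed cycle. -/
def IsAcyclicEdges (n : ℕ) (E : Finset (Fin n × Fin n)) : Prop :=
  ∀ i : Fin n, ¬ Relation.TransGen (fun a b => (a, b) ∈ E) i i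

/-- Quadratic form `x ⊤ Q x = ∑ i ∑ j Q i j * x i * x j`. -/
def quadForm (n : ℕ) (Q : Matrix (Fin n) (Fin n) ℝ) (x : Fin n → ℝ) : ℝ :=
  ∑ i, ∑ j, Q i j * x i * x j

/-- Coefficient `a_{i,j}` of `x_i x_j` (or of `x_i` if `i = j`) in `x ⊤ Q x`. -/
def aCoef (n : ℕ) (Q : Matrix (Fin n) (Fin n) ℝ) (i j : Fin n) : ℝ :=
  if i = j then Q i i else Q i j + Q j i

/-- `S_{i,j} = ∑_{k ≠ i,j} max {0, a_{j,k} − a_{i,k}} + a_{j,j} − a_{i,i}`. -/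
noncomputable def Sval (n : ℕ) (Q : Matrix (Fin n) (Fin n) ℝ) (i j : Fin n) : ℝ :=
  (∑ k ∈ univ.filter (fun k => k ≠ i ∧ k ≠ j), max 0 (aCoef n Q j k - aCoef n Q i k))
    + aCoef n Q j j - aCoef n Q i i


/-!
If a binary vector `x` violates an edge `(i, j)`, i.e. `x i = 1` and `x j = 0`, moving its `1`
from `i` to `j` changes `xᵀ Q x` by `∑_{k ≠ i,j} (a_{j,k} - a_{i,k}) x_k + a_{j,j} - a_{i,i}`,
which is at most `S_{i,j} ≤ 0`. As the order is acyclic, its vertices carry ranks increasing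
along edges, and such a move strictly increases `∑ rank_k x_k`. Hence a minimiser of `xᵀ Q x`
over `{0,1}^n` maximising this sum among all minimisers respects every edge.
-/

open Matrix

lemma Fintype.sum_eq_sum_filter_ne_ne_add_add {α M : Type*} [Fintype α] [DecidableEq α]
    [AddCommMonoid M] {i j : α} (hij : i ≠ j) (g : α → M) :
    ∑ k, g k = ∑ k ∈ univ.filter (fun k => k ≠ i ∧ k ≠ j), g k + g i + g j := by
  have hF : univ.filter (fun k => k ≠ i ∧ k ≠ j) = univ \ {i, j} := by
    ext k; simp [not_or]
  rw [hF, ← sum_sdiff (subset_univ {i, j}), sum_pair hij, add_assoc]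

lemma Relation.exists_rank_of_acyclic {α : Type*} [Finite α] {r : α → α → Prop}
    (hr : ∀ a, ¬ TransGen r a a) : ∃ f : α → ℕ, ∀ a b, r a b → f a < f b :=
  ⟨fun b => {a | TransGen r a b}.ncard, fun a _ hab =>
    Set.ncard_lt_ncard ⟨fun _ hp => hp.tail hab, fun hsub => hr a (hsub (.single hab))⟩
      (Set.toFinite _)⟩

lemma csInf_image_eq_of_forall_le {α β : Type*} [ConditionallyCompleteLattice β] {f : α → β}
    {s t : Set α} {y : α} (hts : t ⊆ s) (hy : y ∈ t) (hmin : ∀ x ∈ s, f y ≤ f x) :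
    sInf (f '' s) = sInf (f '' t) := by
  have hleast : ∀ u ⊆ s, y ∈ u → IsLeast (f '' u) (f y) := fun u hus hyu =>
    ⟨⟨y, hyu, rfl⟩, by rintro _ ⟨x, hx, rfl⟩; exact hmin x (hus hx)⟩
  rw [(hleast s subset_rfl (hts hy)).csInf_eq, (hleast t hts hy).csInf_eq]

lemma Bset_finite (n : ℕ) : (Bset n).Finite :=
  (Set.Finite.pi fun _ => Set.toFinite ({0, 1} : Set ℝ)).subset fun _ hx i _ => hx i

lemma quadForm_eq_dotProduct_mulVec (n : ℕ) (Q : Matrix (Fin n) (Fin n) ℝ) (x : Fin n → ℝ) :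
    quadForm n Q x = x ⬝ᵥ Q *ᵥ x := by
  simp only [quadForm, dotProduct, mulVec, mul_sum]
  exact sum_congr rfl fun i _ => sum_congr rfl fun j _ => by ring

lemma quadForm_add_single_sub_single (n : ℕ) (Q : Matrix (Fin n) (Fin n) ℝ)
    (x : Fin n → ℝ) (i j : Fin n) :
    quadForm n Q (x + Pi.single j 1 - Pi.single i 1) = quadForm n Q x
      + ∑ k, (Q j k + Q k j - Q i k - Q k i) * x k + (Q j j + Q i i - Q i j - Q j i) := by
  simp only [quadForm_eq_dotProduct_mulVec, mulVec_add, mulVec_sub, dotProduct_add,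
    dotProduct_sub, add_dotProduct, sub_dotProduct, single_dotProduct, mulVec_single_one]
  simp only [mulVec, dotProduct, col_apply, one_mul, add_mul, sub_mul, sum_add_distrib,
    sum_sub_distrib, mul_comm (x _)]
  ring

section Swap

variable {n : ℕ} {x : Fin n → ℝ} {i j : Fin n}

lemma add_single_sub_single_mem_Bset (hx : x ∈ Bset n) (hxi : x i = 1) (hxj : x j = 0) :
    x + Pi.single j 1 - Pi.single i 1 ∈ Bset n := by
  intro k
  by_cases hkj : k = j
  · subst hkj
    simp [hxj, show i ≠ k by rintro rfl; simp_all]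
  by_cases hki : k = i
  · subst hki
    simp [hxi, hkj]
  simpa [Pi.single_apply, hkj, hki] using hx k

lemma quadForm_add_single_sub_single_le (Q : Matrix (Fin n) (Fin n) ℝ) (hx : x ∈ Bset n)
    (hxi : x i = 1) (hxj : x j = 0) :
    quadForm n Q (x + Pi.single j 1 - Pi.single i 1) ≤ quadForm n Q x + Sval n Q i j := by
  have hij : i ≠ j := by rintro rfl; simp_all
  have hsum : ∑ k ∈ univ.filter (fun k => k ≠ i ∧ k ≠ j), (Q j k + Q k j - Q i k - Q k i) * x k
      ≤ ∑ k ∈ univ.filter (fun k => k ≠ i ∧ k ≠ j), max 0 (aCoef n Q j k - aCoef n Q i k) := by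
    refine sum_le_sum fun k hk => ?_
    obtain ⟨hki, hkj⟩ := (mem_filter.mp hk).2
    rw [aCoef, aCoef, if_neg (Ne.symm hkj), if_neg (Ne.symm hki)]
    rcases hx k with h | h <;> simp [h, sub_sub]
  rw [quadForm_add_single_sub_single, Fintype.sum_eq_sum_filter_ne_ne_add_add hij, hxi, hxj,
    Sval, aCoef, aCoef, if_pos rfl, if_pos rfl]
  linarith

end Swap

lemma exists_mem_BsetG_forall_quadForm_le (n : ℕ) (Q : Matrix (Fin n) (Fin n) ℝ)
    (E : Finset (Fin n × Fin n)) (hdag : IsAcyclicEdges n E)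
    (hS : ∀ e ∈ E, Sval n Q e.1 e.2 ≤ 0) :
    ∃ y ∈ BsetG n E, ∀ x ∈ Bset n, quadForm n Q y ≤ quadForm n Q x := by
  obtain ⟨rank, hrank⟩ := Relation.exists_rank_of_acyclic hdag
  obtain ⟨x₀, hx₀, hmin⟩ := Set.exists_min_image _ (quadForm n Q) (Bset_finite n)
    ⟨0, fun _ => Or.inl rfl⟩
  let M := {x | x ∈ Bset n ∧ quadForm n Q x ≤ quadForm n Q x₀}
  obtain ⟨y, ⟨hy, hyx₀⟩, hymax⟩ := Set.exists_max_image M (fun x => (fun k => (rank k : ℝ)) ⬝ᵥ x)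
    ((Bset_finite n).subset fun _ hx => hx.1) ⟨x₀, hx₀, le_rfl⟩
  refine ⟨y, ⟨hy, fun e he hy₁ => ?_⟩, fun x hx => hyx₀.trans (hmin x hx)⟩
  by_contra hy₂
  have hy₀ : y e.2 = 0 := (hy e.2).resolve_right hy₂
  have hswap := hymax _ ⟨add_single_sub_single_mem_Bset hy hy₁ hy₀,
    (quadForm_add_single_sub_single_le Q hy hy₁ hy₀).trans (by linarith [hS e he])⟩
  have hlt : (rank e.1 : ℝ) < rank e.2 := by exact_mod_cast hrank _ _ he
  simp only [dotProduct_add, dotProduct_sub, dotProduct_single, mul_one] at hswap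
  linarith

theorem stmt5 (n : ℕ) (Q : Matrix (Fin n) (Fin n) ℝ)
    (E : Finset (Fin n × Fin n)) (hdag : IsAcyclicEdges n E)
    (hS : ∀ e ∈ E, Sval n Q e.1 e.2 ≤ 0) :
    sInf (quadForm n Q '' Bset n) = sInf (quadForm n Q '' BsetG n E) := by
  obtain ⟨y, hy, hmin⟩ := exists_mem_BsetG_forall_quadForm_le n Q E hdag hS
  exact csInf_image_eq_of_forall_le (fun _ hx => hx.1) hy hmin
end

section
/- Let Q ∈ ℝ^{n×n}, with a_{i,j} := Q_{i,j} + Q_{j,i} for i ≠ j, a_{i,i} := Q_{i,i}, and S_{i,j} := Σ_{k ≠ i,j} max{0, a_{j,k} − a_{i,k}} + a_{j,j} − a_{i,i}. Suppose indices i_1, i_2, …, i_l (pairwise distinct, l ≥ 2) form a directed cycle such that S_{i_t, i_{t+1}} ≤ 0 for t = 1,…,l (with i_{l+1} := i_1). Then a_{i_1,i_1} = a_{i_2,i_2} = ⋯ = a_{i_l,i_l}, and for every k ∈ {1,…,n}, the values a_{i_t, k} are equal for all t with i_t ≠ k; that is, φ(x) = x^⊤ Q x is symmetric with respect to the variables x_{i_1},…,x_{i_l}.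 -/
open Finset

lemma aSymm (n : ℕ) (Q : Matrix (Fin n) (Fin n) ℝ) (i j : Fin n) :
    aCoef n Q i j = aCoef n Q j i := by
  unfold aCoef
  by_cases h : i = j
  · subst h; simp
  · rw [if_neg h, if_neg (Ne.symm h)]; ring

lemma cyc_const {l : ℕ} [NeZero l] (f : Fin l → ℝ)
    (h : ∀ t : Fin l, f (t + 1) ≤ f t) : ∀ s t : Fin l, f s = f t := by
  have hsum : ∑ t : Fin l, f (t + 1) = ∑ t : Fin l, f t :=
    Fintype.sum_equiv (Equiv.addRight 1) _ _ (fun t => rfl)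
  have heq : ∀ t : Fin l, f (t + 1) = f t := by
    have := (Finset.sum_eq_sum_iff_of_le (fun i _ => h i)).mp hsum
    intro t; exact this t (Finset.mem_univ t)
  have hl0 : 0 < l := Nat.pos_of_ne_zero (NeZero.ne l)
  have key : ∀ m : ℕ, f ⟨m % l, Nat.mod_lt _ hl0⟩ = f ⟨0 % l, Nat.mod_lt _ hl0⟩ := by
    intro m
    induction m with
    | zero => rfl
    | succ m ih =>
      have hmk : (⟨(m + 1) % l, Nat.mod_lt _ hl0⟩ : Fin l)
          = (⟨m % l, Nat.mod_lt _ hl0⟩ : Fin l) + 1 := by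
        apply Fin.ext
        rw [Fin.val_add]
        simp only [Fin.val_one']
        exact Nat.add_mod m 1 l
      rw [hmk, heq, ih]
  intro s t
  have hs : (⟨s.val % l, Nat.mod_lt _ hl0⟩ : Fin l) = s := Fin.ext (Nat.mod_eq_of_lt s.isLt)
  have ht : (⟨t.val % l, Nat.mod_lt _ hl0⟩ : Fin l) = t := Fin.ext (Nat.mod_eq_of_lt t.isLt)
  rw [← hs, ← ht, key s.val, key t.val]

theorem stmt12 (n l : ℕ) (hl : 2 ≤ l) (Q : Matrix (Fin n) (Fin n) ℝ)
    (idx : Fin l → Fin n) (hinj : Function.Injective idx)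
    (hcycle : ∀ t : Fin l,
      Sval n Q (idx t) (idx ⟨((t : ℕ) + 1) % l, Nat.mod_lt _ (by omega)⟩) ≤ 0) :
    (∀ s t : Fin l, aCoef n Q (idx s) (idx s) = aCoef n Q (idx t) (idx t)) ∧
      (∀ k : Fin n, ∀ s t : Fin l, idx s ≠ k → idx t ≠ k →
        aCoef n Q (idx s) k = aCoef n Q (idx t) k) := by
  haveI : NeZero l := ⟨by omega⟩
  have hfin : ∀ t : Fin l,
      (⟨((t : ℕ) + 1) % l, Nat.mod_lt _ (by omega)⟩ : Fin l) = t + 1 := by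
    intro t
    apply Fin.ext
    rw [Fin.val_add]
    simp only [Fin.val_one']
    rw [Nat.add_mod_mod]
  have hS : ∀ t : Fin l, Sval n Q (idx t) (idx (t + 1)) ≤ 0 := by
    intro t
    have h := hcycle t
    rwa [hfin t] at h
  have hM0 : ∀ i j : Fin n,
      0 ≤ ∑ k ∈ univ.filter (fun k => k ≠ i ∧ k ≠ j), max 0 (aCoef n Q j k - aCoef n Q i k) :=
    fun i j => Finset.sum_nonneg fun k _ => le_max_left _ _
  -- diagonal entries are nonincreasing along the cycle
  have hd : ∀ t : Fin l,
      aCoef n Q (idx (t + 1)) (idx (t + 1)) ≤ aCoef n Q (idx t) (idx t) := by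
    intro t
    have h1 := hS t
    unfold Sval at h1
    have h2 := hM0 (idx t) (idx (t + 1))
    linarith
  have hdeq := cyc_const (fun t => aCoef n Q (idx t) (idx t)) hd
  -- off-diagonal inequalities along the cycle
  have hB : ∀ t : Fin l, ∀ k : Fin n, k ≠ idx t → k ≠ idx (t + 1) →
      aCoef n Q (idx (t + 1)) k ≤ aCoef n Q (idx t) k := by
    intro t k hk1 hk2
    have h1 := hS t
    unfold Sval at h1
    have hde : aCoef n Q (idx (t + 1)) (idx (t + 1)) = aCoef n Q (idx t) (idx t) := hdeq _ _
    have hMle : ∑ k ∈ univ.filter (fun k => k ≠ idx t ∧ k ≠ idx (t + 1)),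
        max 0 (aCoef n Q (idx (t + 1)) k - aCoef n Q (idx t) k) ≤ 0 := by linarith
    have hz := (Finset.sum_eq_zero_iff_of_nonneg
      (fun k _ => le_max_left 0 (aCoef n Q (idx (t + 1)) k - aCoef n Q (idx t) k))).mp
      (le_antisymm hMle (hM0 _ _)) k (by simp [hk1, hk2])
    have : aCoef n Q (idx (t + 1)) k - aCoef n Q (idx t) k ≤ 0 := by
      by_contra hcon
      push_neg at hcon
      rw [max_eq_right hcon.le] at hz
      linarith
    linarith
  have hne11 : ∀ t : Fin l, t + 1 ≠ t := by
    intro t h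
    rw [add_eq_left] at h
    have h2 := congrArg Fin.val h
    rw [Fin.val_one', Nat.mod_eq_of_lt (by omega)] at h2
    simp at h2
  refine ⟨hdeq, ?_⟩
  intro k p q hp hq
  by_cases hk : ∃ s : Fin l, idx s = k
  · obtain ⟨s, hsk⟩ := hk
    subst hsk
    -- g: modified function constant along the cycle
    set g : Fin l → ℝ := fun t =>
      if t = s then aCoef n Q (idx (s + 1)) (idx s) else aCoef n Q (idx t) (idx s) with hg
    have hstep : ∀ t : Fin l, g (t + 1) ≤ g t := by
      intro t
      by_cases h1 : t = s
      · subst h1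
        simp only [hg, if_neg (hne11 t), if_pos rfl]
        exact le_rfl
      · by_cases h2 : t + 1 = s
        · by_cases h3 : s + 1 = t
          · have ha : g (t + 1) = aCoef n Q (idx (s + 1)) (idx s) := by
              rw [h2]; simp only [hg, if_pos rfl]
            have hb : g t = aCoef n Q (idx (s + 1)) (idx s) := by
              simp only [hg, if_neg h1, ← h3]
              rw [ite_self]
            rw [ha, hb]
          · -- closing inequality
            have e1 : aCoef n Q (idx (t + 1)) (idx (s + 1)) ≤ aCoef n Q (idx t) (idx (s + 1)) := by
              refine hB t (idx (s + 1)) ?_ ?_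
              · intro h; exact h3 (hinj h)
              · intro h
                have h4 : s + 1 = t + 1 := hinj h
                rw [h2] at h4
                exact hne11 s h4
            have e2 : aCoef n Q (idx (s + 1)) (idx t) ≤ aCoef n Q (idx s) (idx t) := by
              refine hB s (idx t) ?_ ?_
              · intro h; exact h1 (hinj h)
              · intro h; exact h3 (hinj h).symm
            have ha : g (t + 1) = aCoef n Q (idx (s + 1)) (idx s) := by
              rw [h2]; simp only [hg, if_pos rfl]
            have hb : g t = aCoef n Q (idx t) (idx s) := by
              simp only [hg, if_neg h1]
            rw [ha, hb]
            calc aCoef n Q (idx (s + 1)) (idx s)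
                = aCoef n Q (idx s) (idx (s + 1)) := aSymm n Q _ _
              _ = aCoef n Q (idx (t + 1)) (idx (s + 1)) := by rw [h2]
              _ ≤ aCoef n Q (idx t) (idx (s + 1)) := e1
              _ = aCoef n Q (idx (s + 1)) (idx t) := aSymm n Q _ _
              _ ≤ aCoef n Q (idx s) (idx t) := e2
              _ = aCoef n Q (idx t) (idx s) := aSymm n Q _ _
        · simp only [hg, if_neg h2, if_neg h1]
          exact hB t (idx s) (fun h => h1 (hinj h).symm) (fun h => h2 (hinj h).symm)
    have hgc := cyc_const g hstep
    have hps : p ≠ s := fun h => hp (congrArg idx h)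
    have hqs : q ≠ s := fun h => hq (congrArg idx h)
    have := hgc p q
    simpa only [hg, if_neg hps, if_neg hqs] using this
  · push_neg at hk
    have hstep : ∀ t : Fin l, aCoef n Q (idx (t + 1)) k ≤ aCoef n Q (idx t) k :=
      fun t => hB t k (Ne.symm (hk t)) (Ne.symm (hk (t + 1)))
    exact cyc_const (fun t => aCoef n Q (idx t) k) hstep p q
end

section
/- Let Q ∈ ℝ^{n×n}, with a_{i,j} := Q_{i,j} + Q_{j,i} for i ≠ j, a_{i,i} := Q_{i,i}, and S_{i,j} := Σ_{k ≠ i,j} max{0, a_{j,k} − a_{i,k}} + a_{j,j} − a_{i,i}. Define the edge set E := { (i, j) : i ≠ j, S_{i,j} ≤ 0, and (S_{j,i} ≤ 0 implies i < j) } and let G = (V, E) with V = {1,…,n}. Then min { x^⊤ Q x : x ∈ {0,1}^n } = min { x^⊤ Q x : x ∈ B_n^G }, i.e., G is valid with respect to minimization of φ(x) = x^⊤ Q x. -/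
/-!
For a binary `y` with `y i = y j = 0`, expanding the quadratic form gives
`φ(y + eⱼ) - φ(y + eᵢ) = ∑_{k ≠ i,j} (a_{j,k} - a_{i,k}) y k + a_{j,j} - a_{i,i} ≤ S_{i,j}`,
so along an edge `(i, j)` a `1` may be moved from `i` to `j` without increasing `φ`.
Since `a` is symmetric, `S` satisfies the triangle inequality `S_{i,k} ≤ S_{i,j} + S_{j,k}`
on distinct triples, which makes `E` transitive and hence acyclic. The number of predecessors
is then a rank that strictly increases along edges, so every such move strictly increases
`∑ₖ rank k * x k`, and a minimiser of `φ` maximising this potential satisfies every edge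
constraint.
-/

open Finset

/-- The edge set extracted from `Q`:
`E = {(i,j) : i ≠ j, S_{i,j} ≤ 0, and (S_{j,i} ≤ 0 → i < j)}`. -/
noncomputable def ordE (n : ℕ) (Q : Matrix (Fin n) (Fin n) ℝ) :
    Finset (Fin n × Fin n) :=
  univ.filter (fun p : Fin n × Fin n =>
    p.1 ≠ p.2 ∧ Sval n Q p.1 p.2 ≤ 0 ∧ (Sval n Q p.2 p.1 ≤ 0 → p.1 < p.2))

open Matrix

lemma exists_mem_le_of_forall_exists_lt {α β γ : Type*} [Preorder β] [LinearOrder γ]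
    {s t : Set α} (hs : s.Finite) {f : α → β} {w : α → γ}
    (h : ∀ x ∈ s, x ∉ t → ∃ y ∈ s, f y ≤ f x ∧ w x < w y) :
    ∀ x ∈ s, ∃ y ∈ t, f y ≤ f x := by
  intro x hx
  -- a `w`-maximal element of `{y ∈ s | f y ≤ f x}` cannot be improved, so it lies in `t`
  obtain ⟨y, ⟨hys, hyx⟩, hmax⟩ := Set.exists_max_image {y | y ∈ s ∧ f y ≤ f x} w
    (hs.subset fun _ hy => hy.1) ⟨x, hx, le_rfl⟩
  by_cases hyt : y ∈ t
  · exact ⟨y, hyt, hyx⟩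
  obtain ⟨z, hzs, hzy, hwz⟩ := h y hys hyt
  exact absurd (hmax z ⟨hzs, hzy.trans hyx⟩) hwz.not_ge

lemma csInf_image_eq_of_forall_exists_le {α β : Type*} [ConditionallyCompleteLinearOrder β]
    {s t : Set α} (hs : s.Finite) (hts : t ⊆ s) {f : α → β}
    (h : ∀ x ∈ s, ∃ y ∈ t, f y ≤ f x) :
    sInf (f '' s) = sInf (f '' t) := by
  rcases s.eq_empty_or_nonempty with rfl | ⟨x, hx⟩
  · rw [Set.subset_empty_iff.1 hts]
  have ht : t.Nonempty := let ⟨y, hy, _⟩ := h x hx; ⟨y, hy⟩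
  refine le_antisymm (csInf_le_csInf (hs.image f).bddBelow (ht.image f) (Set.image_mono hts))
    (le_csInf (Set.Nonempty.image f ⟨x, hx⟩) ?_)
  rintro _ ⟨x, hx, rfl⟩
  obtain ⟨y, hy, hyx⟩ := h x hx
  exact (csInf_le ((hs.subset hts).image f).bddBelow ⟨y, hy, rfl⟩).trans hyx

lemma max_zero_sub_le_add (a b c : ℝ) : max 0 (a - c) ≤ max 0 (a - b) + max 0 (b - c) :=
  max_le (by positivity) (by linarith [le_max_right 0 (a - b), le_max_right 0 (b - c)])

lemma sub_single_mem_Bset {n : ℕ} {x : Fin n → ℝ} (hx : x ∈ Bset n) {i : Fin n}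
    (hxi : x i = 1) :
    x - Pi.single i 1 ∈ Bset n := by
  intro k
  rcases eq_or_ne k i with rfl | hk
  · simp [hxi]
  · simpa [hk] using hx k

lemma add_single_mem_Bset {n : ℕ} {y : Fin n → ℝ} (hy : y ∈ Bset n) {j : Fin n}
    (hyj : y j = 0) :
    y + Pi.single j 1 ∈ Bset n := by
  intro k
  rcases eq_or_ne k j with rfl | hk
  · simp [hyj]
  · simpa [hk] using hy k

section

variable (n : ℕ) (Q : Matrix (Fin n) (Fin n) ℝ)

lemma quadForm_add_single (y : Fin n → ℝ) (l : Fin n) :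
    quadForm n Q (y + Pi.single l 1) = quadForm n Q y + (Q *ᵥ y) l + (y ᵥ* Q) l + Q l l := by
  simp only [quadForm, Pi.add_apply, mul_add, add_mul, Finset.sum_add_distrib, Pi.single_apply,
    mul_ite, ite_mul, mul_one, mul_zero, zero_mul, Finset.sum_ite_irrel, Finset.sum_const_zero,
    Finset.sum_ite_eq', Finset.mem_univ, if_true, mulVec, vecMul, dotProduct, mul_comm (y _)]
  ring

lemma quadForm_add_single_le_add_Sval {y : Fin n → ℝ} (hy : y ∈ Bset n) {i j : Fin n}
    (hi : y i = 0) (hj : y j = 0) :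
    quadForm n Q (y + Pi.single j 1) ≤ quadForm n Q (y + Pi.single i 1) + Sval n Q i j := by
  have hterm : ∀ k, (Q j k + Q k j - (Q i k + Q k i)) * y k
      ≤ if k ≠ i ∧ k ≠ j then max 0 (aCoef n Q j k - aCoef n Q i k) else 0 := by
    intro k
    by_cases hk : k ≠ i ∧ k ≠ j
    · rw [if_pos hk, aCoef, aCoef, if_neg hk.2.symm, if_neg hk.1.symm]
      rcases hy k with h | h <;> simp [h]
    · rw [if_neg hk]
      obtain rfl | rfl : k = i ∨ k = j := by tauto
      · simp [hi]
      · simp [hj]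
  have hsum := Finset.sum_le_sum fun k (_ : k ∈ univ) => hterm k
  rw [← Finset.sum_filter] at hsum
  simp only [sub_mul, add_mul, Finset.sum_sub_distrib, Finset.sum_add_distrib] at hsum
  have hdiag : ∀ l, aCoef n Q l l = Q l l := fun l => if_pos rfl
  rw [quadForm_add_single, quadForm_add_single, Sval, hdiag, hdiag]
  simp only [mulVec, vecMul, dotProduct, mul_comm (y _)] at hsum ⊢
  linarith

lemma aCoef_comm (i j : Fin n) : aCoef n Q i j = aCoef n Q j i := by
  unfold aCoef
  grind

lemma Sval_le_add {i j k : Fin n} (hij : i ≠ j) (hjk : j ≠ k) (hik : i ≠ k) :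
    Sval n Q i k ≤ Sval n Q i j + Sval n Q j k := by
  set F := univ.filter fun l => l ≠ i ∧ l ≠ j ∧ l ≠ k
  have hik' : univ.filter (fun l => l ≠ i ∧ l ≠ k) = insert j F := by grind
  have hij' : univ.filter (fun l => l ≠ i ∧ l ≠ j) = insert k F := by grind
  have hjk' : univ.filter (fun l => l ≠ j ∧ l ≠ k) = insert i F := by grind
  have hF : ∑ l ∈ F, max 0 (aCoef n Q k l - aCoef n Q i l)
      ≤ ∑ l ∈ F,
          (max 0 (aCoef n Q j l - aCoef n Q i l) + max 0 (aCoef n Q k l - aCoef n Q j l)) :=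
    Finset.sum_le_sum fun l _ => by rw [add_comm]; exact max_zero_sub_le_add _ _ _
  -- the `j`-term of `S_{i,k}` is paid for by the `k`-term of `S_{i,j}` and the `i`-term
  -- of `S_{j,k}`
  have hj : max 0 (aCoef n Q k j - aCoef n Q i j)
      ≤ max 0 (aCoef n Q j k - aCoef n Q i k) + max 0 (aCoef n Q k i - aCoef n Q j i) := by
    rw [aCoef_comm n Q k j, aCoef_comm n Q k i, aCoef_comm n Q j i]
    exact max_zero_sub_le_add _ _ _
  rw [Finset.sum_add_distrib] at hF
  simp only [Sval, hik', hij', hjk', Finset.sum_insert (show j ∉ F by simp [F]),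
    Finset.sum_insert (show k ∉ F by simp [F]), Finset.sum_insert (show i ∉ F by simp [F])]
  linarith

lemma mem_ordE (i j : Fin n) :
    (i, j) ∈ ordE n Q ↔ i ≠ j ∧ Sval n Q i j ≤ 0 ∧ (Sval n Q j i ≤ 0 → i < j) := by
  simp [ordE]

lemma ordE_trans {i j k : Fin n} (h₁ : (i, j) ∈ ordE n Q) (h₂ : (j, k) ∈ ordE n Q) :
    (i, k) ∈ ordE n Q := by
  rw [mem_ordE] at *
  obtain ⟨hij, hSij, hltij⟩ := h₁
  obtain ⟨hjk, hSjk, hltjk⟩ := h₂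
  have hik : i ≠ k := by
    rintro rfl
    exact (hltij hSjk).asymm (hltjk hSij)
  refine ⟨hik, (Sval_le_add n Q hij hjk hik).trans (by linarith), fun hSki => ?_⟩
  have hSji := (Sval_le_add n Q hjk hik.symm hij.symm).trans (by linarith : _ ≤ (0 : ℝ))
  have hSkj := (Sval_le_add n Q hik.symm hij hjk.symm).trans (by linarith : _ ≤ (0 : ℝ))
  exact (hltij hSji).trans (hltjk hSkj)

noncomputable def edgeRank (i : Fin n) : ℕ :=
  #{k | (k, i) ∈ ordE n Q}

lemma edgeRank_lt {i j : Fin n} (h : (i, j) ∈ ordE n Q) :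
    edgeRank n Q i < edgeRank n Q j := by
  refine Finset.card_lt_card ⟨fun k hk => ?_, fun hsub => ?_⟩
  · simp only [Finset.mem_filter, Finset.mem_univ, true_and] at hk ⊢
    exact ordE_trans n Q hk h
  · have hii : (i, i) ∈ ordE n Q := by simpa using hsub (by simpa using h)
    exact ((mem_ordE n Q i i).1 hii).1 rfl

noncomputable def rankWeight (x : Fin n → ℝ) : ℝ :=
  (fun k => (edgeRank n Q k : ℝ)) ⬝ᵥ x

/-- The witness moves the `1` of `x` from the tail to the head of a violated edge `(i, j)`;
this does not increase the quadratic form since `S_{i,j} ≤ 0`. -/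
lemma exists_swap_of_not_mem_BsetG {x : Fin n → ℝ} (hx : x ∈ Bset n)
    (hxG : x ∉ BsetG n (ordE n Q)) :
    ∃ x' ∈ Bset n,
      quadForm n Q x' ≤ quadForm n Q x ∧ rankWeight n Q x < rankWeight n Q x' := by
  obtain ⟨⟨i, j⟩, hE, hxi, hxj⟩ : ∃ e ∈ ordE n Q, x e.1 = 1 ∧ x e.2 ≠ 1 := by
    simpa [BsetG, hx] using hxG
  have hE' := (mem_ordE n Q i j).1 hE
  set y := x - Pi.single i 1
  have hy : y ∈ Bset n := sub_single_mem_Bset hx hxi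
  have hyi : y i = 0 := by simp [y, hxi]
  have hyj : y j = 0 := by simpa [y, hE'.1.symm] using (hx j).resolve_right hxj
  have hx_eq : x = y + Pi.single i 1 := (sub_add_cancel x _).symm
  refine ⟨y + Pi.single j 1, add_single_mem_Bset hy hyj, ?_, ?_⟩
  · rw [hx_eq]
    linarith [quadForm_add_single_le_add_Sval n Q hy hyi hyj, hE'.2.1]
  · rw [hx_eq]
    simp only [rankWeight, dotProduct_add, dotProduct_single_one, add_lt_add_iff_left]
    exact_mod_cast edgeRank_lt n Q hE

end

theorem stmt14 (n : ℕ) (Q : Matrix (Fin n) (Fin n) ℝ) :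
    sInf (quadForm n Q '' Bset n) = sInf (quadForm n Q '' BsetG n (ordE n Q)) :=
  csInf_image_eq_of_forall_exists_le (Bset_finite n) (fun _ hx => hx.1)
    (exists_mem_le_of_forall_exists_lt (Bset_finite n) fun _ hx hxG =>
      exists_swap_of_not_mem_BsetG n Q hx hxG)
end
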